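/- Let H_2(y) = (y/2 + 1) · ln(1 + (2/y)·(1 + √((2+y)/(y−2)))). Then H_2 is strictly decreasing on [5, ∞), and H_2(3) > H_2(4) > H_2(5); consequently, for every integer d2 ≥ 5, H_2(d2) < H_2(d2 − 2). -/

import Mathlib

/-- `H₂(y) = (y/2 + 1) · ln(1 + (2/y)(1 + √((2+y)/(y−2))))`. -/
noncomputable def H2 (y : ℝ) : ℝ :=
  (y / 2 + 1) * Real.log (1 + (2 / y) * (1 + Real.sqrt ((2 + y) / (y - 2))))

/-!
For `y > 2` put `u = √(y² - 4)`. Since `√((2+y)/(y-2)) = (2+y)/u`, the argument of the logarithm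
factors as `(1 + 2/y)(1 + 2/u)`, and differentiating gives
`H₂'(y) = (log(1 + 2/y) + log(1 + 2/u))/2 - 1/y - y(y+2)/(u²(u+2))`.
With `log(1 + t) < t` this is below `1/u - y(y+2)/(u²(u+2))`, which is negative because `u < y`.
So `H₂` is strictly decreasing on all of `(2, ∞)`, and every claim follows.
-/

open Real Set Filter

lemma H2_eq_mul_log_add_log {y : ℝ} (hy : 2 < y) :
    H2 y = (y / 2 + 1) * (log (1 + 2 / y) + log (1 + 2 / √(y ^ 2 - 4))) := by
  have hsqrt : √((2 + y) / (y - 2)) = (2 + y) / √(y ^ 2 - 4) := by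
    have hsq : (2 + y) / (y - 2) = (2 + y) ^ 2 / (y ^ 2 - 4) := by
      rw [div_eq_div_iff (by linarith) (by nlinarith)]
      ring
    rw [hsq, sqrt_div' _ (by nlinarith), sqrt_sq (by linarith)]
  have hfactor : 1 + 2 / y * (1 + √((2 + y) / (y - 2))) =
      (1 + 2 / y) * (1 + 2 / √(y ^ 2 - 4)) := by
    rw [hsqrt]
    field_simp
    ring
  rw [H2, hfactor, log_mul (by positivity) (by positivity)]

lemma HasDerivAt.log_one_add_const_div {f : ℝ → ℝ} {f' x c : ℝ} (hf : HasDerivAt f f' x)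
    (hfx : 0 < f x) (hc : 0 ≤ c) :
    HasDerivAt (fun y ↦ Real.log (1 + c / f y)) (-c * f' / (f x * (f x + c))) x := by
  have hpos : 1 + c / f x ≠ 0 := by positivity
  refine (((hasDerivAt_const x 1).fun_add
    ((hasDerivAt_const x c).fun_div hf hfx.ne')).log hpos).congr_deriv ?_
  field_simp
  ring

lemma hasDerivAt_sqrt_sq_sub {a x : ℝ} (h : a < x ^ 2) :
    HasDerivAt (fun y ↦ √(y ^ 2 - a)) (x / √(x ^ 2 - a)) x := by
  refine (((hasDerivAt_pow 2 x).sub_const a).sqrt (by linarith)).congr_deriv ?_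
  field_simp
  ring

/-- `u` stands for `√(x² - 4)`, kept free so that the sign estimate involves no square root. -/
noncomputable def H2Deriv (x u : ℝ) : ℝ :=
  (log (1 + 2 / x) + log (1 + 2 / u)) / 2 - 1 / x - x * (x + 2) / (u ^ 2 * (u + 2))

lemma hasDerivAt_H2 {x : ℝ} (hx : 2 < x) : HasDerivAt H2 (H2Deriv x √(x ^ 2 - 4)) x := by
  have hu : 0 < √(x ^ 2 - 4) := sqrt_pos.mpr (by nlinarith)
  have hsum := ((hasDerivAt_id' x).log_one_add_const_div (by linarith) zero_le_two).fun_add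
    ((hasDerivAt_sqrt_sq_sub (by nlinarith)).log_one_add_const_div hu zero_le_two)
  have hprod := (((hasDerivAt_id' x).div_const 2).add_const 1).fun_mul hsum
  refine HasDerivAt.congr_of_eventuallyEq ?_
    ((eventually_gt_nhds hx).mono fun y hy ↦ H2_eq_mul_log_add_log hy)
  refine hprod.congr_deriv ?_
  rw [H2Deriv]
  field_simp
  ring

lemma H2Deriv_neg {x u : ℝ} (hu : 0 < u) (hux : u < x) : H2Deriv x u < 0 := by
  have hx : 0 < x := hu.trans hux
  have hlog_x : log (1 + 2 / x) < 2 / x := by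
    linarith [log_lt_sub_one_of_pos (by positivity : 0 < 1 + 2 / x) (by simp; positivity)]
  have hlog_u : log (1 + 2 / u) < 2 / u := by
    linarith [log_lt_sub_one_of_pos (by positivity : 0 < 1 + 2 / u) (by simp; positivity)]
  have hcmp : 1 / u < x * (x + 2) / (u ^ 2 * (u + 2)) := by
    rw [div_lt_div_iff₀ hu (by positivity)]
    nlinarith [mul_pos hu (mul_pos (sub_pos.2 hux) (by linarith : 0 < x + u + 2))]
  have hx_half : 1 / x = 2 / x / 2 := by ring
  have hu_half : 1 / u = 2 / u / 2 := by ring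
  rw [H2Deriv]
  linarith

theorem strictAntiOn_H2 : StrictAntiOn H2 (Ioi 2) := by
  refine strictAntiOn_of_deriv_neg (convex_Ioi 2)
    (fun x hx ↦ (hasDerivAt_H2 hx).continuousAt.continuousWithinAt) fun x hx ↦ ?_
  rw [interior_Ioi, mem_Ioi] at hx
  rw [(hasDerivAt_H2 hx).deriv]
  exact H2Deriv_neg (sqrt_pos.mpr (by nlinarith)) ((sqrt_lt' (by linarith)).mpr (by linarith))

theorem H2_decreasing :
    StrictAntiOn H2 (Set.Ici (5 : ℝ)) ∧ H2 3 > H2 4 ∧ H2 4 > H2 5 ∧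
      ∀ d2 : ℕ, 5 ≤ d2 → H2 (d2 : ℝ) < H2 ((d2 : ℝ) - 2) := by
  have hanti := strictAntiOn_H2
  refine ⟨hanti.mono (Ici_subset_Ioi.mpr (by norm_num)),
    hanti (by norm_num) (by norm_num) (by norm_num),
    hanti (by norm_num) (by norm_num) (by norm_num), fun d2 hd2 ↦ ?_⟩
  have hd2' : (5 : ℝ) ≤ d2 := by exact_mod_cast hd2
  exact hanti (mem_Ioi.mpr (by linarith)) (mem_Ioi.mpr (by linarith)) (by linarith)
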